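/- Let n ≥ 1 and λ_0,...,λ_n > 0 be fixed, let v, v' > 0 with v ≠ v', and let t ∈ (0,1). Suppose e, e', e'' ∈ (0,1)^n satisfy the RFM steady-state equations for the rate vectors (vλ_0, λ_1,...,λ_n), (v'λ_0, λ_1,...,λ_n), and ((tv+(1−t)v')λ_0, λ_1,...,λ_n), respectively. Then λ_n e''_n > t λ_n e_n + (1−t) λ_n e'_n; that is, for an RFMIO with constant input u(t) ≡ v, the map v ↦ y_ss from the input value to the steady-state output is strictly concave on (0,∞). -/
import Mathlib


open scoped BigOperators

/-- Extended occupancy vector of an RFM chain with `N + 1` sites: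
the input value `u` at the left boundary, the state in the middle,
and `0` at the right boundary. -/
noncomputable def rfmExt {N : ℕ} (u : ℝ) (x : Fin (N + 1) → ℝ) : Fin (N + 3) → ℝ :=
  Fin.cons u (Fin.snoc x 0)

/-- The flow into site `j` (so `j = 0` is the entry flow `λ₀ u (1 - x₁)`,
`j` internal is `λ_j x_j (1 - x_{j+1})` in 1-based notation,
and `j = N + 1` is the exit flow `λ_n x_n`). -/
noncomputable def rfmFlow {N : ℕ} (lam : Fin (N + 2) → ℝ) (u : ℝ)
    (x : Fin (N + 1) → ℝ) (j : Fin (N + 2)) : ℝ :=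
  lam j * rfmExt u x j.castSucc * (1 - rfmExt u x j.succ)

/-- The vector field of a single RFMIO chain with input `u`. -/
noncomputable def rfmVF {N : ℕ} (lam : Fin (N + 2) → ℝ) (u : ℝ)
    (x : Fin (N + 1) → ℝ) (j : Fin (N + 1)) : ℝ :=
  rfmFlow lam u x j.castSucc - rfmFlow lam u x j.succ

/-- The steady-state equations of an RFM chain with input `u`: all flows are equal,
i.e. `λ₀ u (1-e₁) = λ₁ e₁ (1-e₂) = ⋯ = λ_n e_n`. -/
def rfmSS {N : ℕ} (lam : Fin (N + 2) → ℝ) (u : ℝ) (e : Fin (N + 1) → ℝ) : Prop :=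
  ∀ j : Fin (N + 1), rfmFlow lam u e j.castSucc = rfmFlow lam u e j.succ

/-- The rate vector of an RFMIO with constant input `v`: the initiation rate `λ₀` is
replaced by `v λ₀` and the other rates are unchanged. -/
noncomputable def scaledRates {N : ℕ} (lam : Fin (N + 2) → ℝ) (v : ℝ) :
    Fin (N + 2) → ℝ :=
  fun j => if j = 0 then v * lam 0 else lam j

private lemma rfm_mono_step (L r r' b b' a a' : ℝ) (hL : 0 < L) (hb' : 0 < b') (ha' : a' < 1)
    (haa : a < a') (hrr : r < r') (h1 : L*b*(1-a) = r) (h2 : L*b'*(1-a') = r') : b < b' := by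
  nlinarith [mul_pos (mul_pos hL hb') (sub_pos.2 haa),
    mul_pos hL (show (0:ℝ) < 1 - a by linarith)]

private lemma rfm_SL (L t r1 r2 r3 a1 a2 a3 b1 b2 b3 : ℝ)
    (hL : 0 < L) (ht : 0 < t) (ht1 : t < 1)
    (ha1 : 0 < a1) (ha1' : a1 < 1) (ha2 : 0 < a2) (ha2' : a2 < 1) (ha3' : a3 < 1)
    (ha12 : a1 < a2) (hr1 : 0 < r1) (hr12 : r1 < r2) (hr3 : 0 < r3)
    (hr3le : r3 ≤ t*r1 + (1-t)*r2) (ha3s : a3 ≤ t*a1 + (1-t)*a2)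
    (hb1 : L*b1*(1-a1) = r1) (hb2 : L*b2*(1-a2) = r2) (hb3 : L*b3*(1-a3) = r3) :
    b3 < t*b1 + (1-t)*b2 := by
  have ht1' : (0:ℝ) < 1 - t := by linarith
  have hD1 : (0:ℝ) < 1 - a1 := by linarith
  have hD2 : (0:ℝ) < 1 - a2 := by linarith
  have hD3 : (0:ℝ) < 1 - a3 := by linarith
  have hDs : (0:ℝ) < 1 - (t*a1 + (1-t)*a2) := by nlinarith
  have hLD1 : (0:ℝ) < L * (1-a1) := by positivity
  have hLD2 : (0:ℝ) < L * (1-a2) := by positivity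
  have hLD3 : (0:ℝ) < L * (1-a3) := by positivity
  have hLDs : (0:ℝ) < L * (1 - (t*a1 + (1-t)*a2)) := by positivity
  have eb1 : b1 = r1 / (L*(1-a1)) := by
    rw [eq_div_iff (ne_of_gt hLD1)]; linear_combination hb1
  have eb2 : b2 = r2 / (L*(1-a2)) := by
    rw [eq_div_iff (ne_of_gt hLD2)]; linear_combination hb2
  have eb3 : b3 = r3 / (L*(1-a3)) := by
    rw [eq_div_iff (ne_of_gt hLD3)]; linear_combination hb3
  have step1 : r3 / (L*(1-a3)) ≤ (t*r1+(1-t)*r2) / (L*(1-(t*a1+(1-t)*a2))) := by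
    apply div_le_div₀ (le_of_lt (add_pos (mul_pos ht hr1) (mul_pos ht1' (hr1.trans hr12))))
      hr3le hLDs
    apply mul_le_mul_of_nonneg_left (by linarith) hL.le
  have hq : (0:ℝ) < r2*(1-a1) - r1*(1-a2) := by
    nlinarith [mul_pos (sub_pos.2 hr12) hD1, mul_pos hr1 (sub_pos.2 ha12)]
  have step2 : (t*r1+(1-t)*r2) / (L*(1-(t*a1+(1-t)*a2)))
      < t*(r1/(L*(1-a1))) + (1-t)*(r2/(L*(1-a2))) := by
    have h12 : t*(r1/(L*(1-a1))) + (1-t)*(r2/(L*(1-a2)))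
        = (t*r1*(1-a2) + (1-t)*r2*(1-a1)) / (L*((1-a1)*(1-a2))) := by
      field_simp
    rw [h12, div_lt_div_iff₀ hLDs (by positivity)]
    nlinarith [mul_pos hL (mul_pos (mul_pos (mul_pos ht ht1') (sub_pos.2 ha12)) hq)]
  rw [eb1, eb2, eb3]
  exact step1.trans_lt step2

private lemma rfmFlow_zero' {N : ℕ} (lam : Fin (N + 2) → ℝ) (u : ℝ) (x : Fin (N+1) → ℝ) :
    rfmFlow lam u x 0 = lam 0 * u * (1 - x 0) := by
  have h : (Fin.snoc x (0:ℝ) : Fin (N+2) → ℝ) (0 : Fin (N+2)) = x 0 := by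
    have h0 : (0:Fin (N+2)) = Fin.castSucc 0 := rfl
    rw [h0, Fin.snoc_castSucc]
  simp [rfmFlow, rfmExt, h]

private lemma rfmFlow_mid' {N : ℕ} (lam : Fin (N + 2) → ℝ) (u : ℝ) (x : Fin (N+1) → ℝ)
    (k : Fin N) :
    rfmFlow lam u x k.castSucc.succ = lam k.castSucc.succ * x k.castSucc * (1 - x k.succ) := by
  unfold rfmFlow rfmExt
  rw [← Fin.succ_castSucc, Fin.cons_succ, Fin.snoc_castSucc,
    Fin.cons_succ, Fin.succ_castSucc, Fin.snoc_castSucc]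

private lemma rfmFlow_last' {N : ℕ} (lam : Fin (N + 2) → ℝ) (u : ℝ) (x : Fin (N+1) → ℝ) :
    rfmFlow lam u x (Fin.last (N+1)) = lam (Fin.last (N+1)) * x (Fin.last N) := by
  unfold rfmFlow rfmExt
  rw [← Fin.succ_last, ← Fin.succ_castSucc, Fin.cons_succ, Fin.snoc_castSucc,
    Fin.cons_succ, Fin.succ_last, Fin.snoc_last]
  ring

private lemma rfm_flows_eq {N : ℕ} (lam : Fin (N + 2) → ℝ) (u : ℝ) (x : Fin (N+1) → ℝ)
    (h : rfmSS lam u x) : ∀ j, rfmFlow lam u x j = rfmFlow lam u x 0 := by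
  intro j
  induction j using Fin.induction with
  | zero => rfl
  | succ i ih => exact (h i).symm.trans ih

private lemma rfm_extract {N : ℕ} (lam : Fin (N+2) → ℝ) (w : ℝ) (x : Fin (N+1) → ℝ)
    (heq : rfmSS (scaledRates lam w) 1 x) :
    (w * lam 0 * (1 - x 0) = lam (Fin.last (N+1)) * x (Fin.last N)) ∧
    (∀ k : Fin N, lam k.castSucc.succ * x k.castSucc * (1 - x k.succ)
      = lam (Fin.last (N+1)) * x (Fin.last N)) := by
  have hconst := rfm_flows_eq _ _ _ heq
  have h0ne : (Fin.last (N+1) : Fin (N+2)) ≠ 0 := by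
    rw [← Fin.succ_last]; exact Fin.succ_ne_zero _
  have hlamlast : scaledRates lam w (Fin.last (N+1)) = lam (Fin.last (N+1)) := if_neg h0ne
  have hlast : rfmFlow (scaledRates lam w) 1 x (Fin.last (N+1))
      = lam (Fin.last (N+1)) * x (Fin.last N) := by
    rw [rfmFlow_last', hlamlast]
  have hzero : rfmFlow (scaledRates lam w) 1 x 0 = w * lam 0 * (1 - x 0) := by
    rw [rfmFlow_zero']
    have : scaledRates lam w 0 = w * lam 0 := if_pos rfl
    rw [this, mul_one]
  constructor
  · rw [← hzero, ← hlast]; exact (hconst _).symm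
  · intro k
    have hkne : (k.castSucc.succ : Fin (N+2)) ≠ 0 := Fin.succ_ne_zero _
    have hk : scaledRates lam w k.castSucc.succ = lam k.castSucc.succ := if_neg hkne
    rw [← hlast, ← hk, ← rfmFlow_mid' (scaledRates lam w) 1 x k, hconst,
      ← hconst (Fin.last (N+1))]

private lemma rfm_aux (N : ℕ) (lam : Fin (N + 2) → ℝ) (hlam : ∀ j, 0 < lam j)
    (v v' : ℝ) (hv : 0 < v) (hv' : 0 < v')
    (t : ℝ) (ht0 : 0 < t) (ht1 : t < 1)
    (e e' e'' : Fin (N + 1) → ℝ)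
    (he : ∀ j, e j ∈ Set.Ioo (0 : ℝ) 1)
    (he' : ∀ j, e' j ∈ Set.Ioo (0 : ℝ) 1)
    (he'' : ∀ j, e'' j ∈ Set.Ioo (0 : ℝ) 1)
    (heq : rfmSS (scaledRates lam v) 1 e)
    (heq' : rfmSS (scaledRates lam v') 1 e')
    (heq'' : rfmSS (scaledRates lam (t * v + (1 - t) * v')) 1 e'')
    (hrr : lam (Fin.last (N+1)) * e (Fin.last N) < lam (Fin.last (N+1)) * e' (Fin.last N)) :
    t * (lam (Fin.last (N + 1)) * e (Fin.last N)) +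
      (1 - t) * (lam (Fin.last (N + 1)) * e' (Fin.last N)) <
      lam (Fin.last (N + 1)) * e'' (Fin.last N) := by
  have hL : 0 < lam (Fin.last (N+1)) := hlam _
  obtain ⟨h0, hk⟩ := rfm_extract lam v e heq
  obtain ⟨h0', hk'⟩ := rfm_extract lam v' e' heq'
  obtain ⟨h0'', hk''⟩ := rfm_extract lam (t * v + (1 - t) * v') e'' heq''
  have hr : 0 < lam (Fin.last (N+1)) * e (Fin.last N) := mul_pos hL (he _).1
  have hr'' : 0 < lam (Fin.last (N+1)) * e'' (Fin.last N) := mul_pos hL (he'' _).1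
  have hmono : ∀ j, e j < e' j := by
    intro j
    induction j using Fin.reverseInduction with
    | last => exact lt_of_mul_lt_mul_left hrr hL.le
    | cast k ih =>
      exact rfm_mono_step (lam k.castSucc.succ) _ _ _ _ _ _ (hlam _)
        (he' k.castSucc).1 (he' k.succ).2 ih hrr (hk k) (hk' k)
  by_contra hcon
  push_neg at hcon
  have hclaim : ∀ j, e'' j ≤ t * e j + (1-t) * e' j := by
    intro j
    induction j using Fin.reverseInduction with
    | last => nlinarith [hL, hcon]
    | cast k ih =>
      refine (rfm_SL (lam k.castSucc.succ) t _ _ _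
        (e k.succ) (e' k.succ) (e'' k.succ)
        (e k.castSucc) (e' k.castSucc) (e'' k.castSucc)
        (hlam _) ht0 ht1 (he k.succ).1 (he k.succ).2 (he' k.succ).1 (he' k.succ).2
        (he'' k.succ).2 (hmono k.succ) hr hrr hr'' hcon ih
        (hk k) (hk' k) (hk'' k)).le
  have hb1 : lam 0 * v * (1 - e 0) = lam (Fin.last (N+1)) * e (Fin.last N) := by
    linear_combination h0
  have hb2 : lam 0 * v' * (1 - e' 0) = lam (Fin.last (N+1)) * e' (Fin.last N) := by
    linear_combination h0'
  have hb3 : lam 0 * (t * v + (1 - t) * v') * (1 - e'' 0)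
      = lam (Fin.last (N+1)) * e'' (Fin.last N) := by
    linear_combination h0''
  have hfin := rfm_SL (lam 0) t _ _ _ (e 0) (e' 0) (e'' 0) v v' (t * v + (1 - t) * v')
    (hlam 0) ht0 ht1 (he 0).1 (he 0).2 (he' 0).1 (he' 0).2 (he'' 0).2 (hmono 0)
    hr hrr hr'' hcon (hclaim 0) hb1 hb2 hb3
  exact lt_irrefl _ hfin

/-- For an RFMIO with constant input `u(t) ≡ v`, the map
`v ↦ y_ss` from the input value to the steady-state output is strictly concave on
`(0, ∞)`: if `e, e', e''` are steady states for the inputs `v`, `v'`, `t v + (1-t) v'`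
respectively (with `v ≠ v'`, `t ∈ (0,1)`), then
`λ_n e''_n > t λ_n e_n + (1-t) λ_n e'_n`. -/
theorem steady_state_output_strictly_concave_in_input
    (N : ℕ) (lam : Fin (N + 2) → ℝ) (hlam : ∀ j, 0 < lam j)
    (v v' : ℝ) (hv : 0 < v) (hv' : 0 < v') (hne : v ≠ v')
    (t : ℝ) (ht : t ∈ Set.Ioo (0 : ℝ) 1)
    (e e' e'' : Fin (N + 1) → ℝ)
    (he : ∀ j, e j ∈ Set.Ioo (0 : ℝ) 1)
    (he' : ∀ j, e' j ∈ Set.Ioo (0 : ℝ) 1)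
    (he'' : ∀ j, e'' j ∈ Set.Ioo (0 : ℝ) 1)
    (heq : rfmSS (scaledRates lam v) 1 e)
    (heq' : rfmSS (scaledRates lam v') 1 e')
    (heq'' : rfmSS (scaledRates lam (t * v + (1 - t) * v')) 1 e'') :
    t * (lam (Fin.last (N + 1)) * e (Fin.last N)) +
      (1 - t) * (lam (Fin.last (N + 1)) * e' (Fin.last N)) <
      lam (Fin.last (N + 1)) * e'' (Fin.last N) := by
  obtain ⟨ht0, ht1⟩ := ht
  have hL : 0 < lam (Fin.last (N+1)) := hlam _
  rcases lt_trichotomy (lam (Fin.last (N+1)) * e (Fin.last N))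
    (lam (Fin.last (N+1)) * e' (Fin.last N)) with h | h | h
  · exact rfm_aux N lam hlam v v' hv hv' t ht0 ht1 e e' e'' he he' he'' heq heq' heq'' h
  · exfalso
    obtain ⟨h0, hk⟩ := rfm_extract lam v e heq
    obtain ⟨h0', hk'⟩ := rfm_extract lam v' e' heq'
    have hall : ∀ j, e j = e' j := by
      intro j
      induction j using Fin.reverseInduction with
      | last => exact mul_left_cancel₀ hL.ne' h
      | cast k ih =>
        have h1 := hk k
        have h2 := hk' k
        rw [← ih] at h2
        have h3 := h1.trans (h.trans h2.symm)
        have hne1 : (1 : ℝ) - e k.succ ≠ 0 := ne_of_gt (by linarith [(he k.succ).2])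
        exact mul_left_cancel₀ (hlam _).ne' (mul_right_cancel₀ hne1 h3)
    apply hne
    have he0 : e 0 = e' 0 := hall 0
    rw [he0, h] at h0
    have h4 := h0.trans h0'.symm
    have hne1 : (1 : ℝ) - e' 0 ≠ 0 := ne_of_gt (by linarith [(he' 0).2])
    exact mul_right_cancel₀ (hlam 0).ne' (mul_right_cancel₀ hne1 h4)
  · have hswap : t * v + (1 - t) * v' = (1-t) * v' + (1 - (1-t)) * v := by ring
    rw [hswap] at heq''
    have := rfm_aux N lam hlam v' v hv' hv (1-t) (by linarith) (by linarith)
      e' e e'' he' he he'' heq' heq heq'' h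
    linarith
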